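/- Let a ∈ ℂ satisfy a³ − 3a² + 2a − 1 = 0. Then a ≠ 0 and a ≠ 2, and the Möbius change of variable τ(z) = 1/(z − a) + 1/a conjugates f_a to the quadratic polynomial P(w) = 1/a − a³(a − 2)·w²: for every z ∈ ℂ with z ≠ 0, z ≠ a and f_a(z) ≠ a, one has 1/(f_a(z) − a) + 1/a = 1/a − a³(a − 2)·(1/(z − a) + 1/a)². -/

import Mathlib

/-!
Since `a` is a critical point of `f_a` fixed by `f_a`, the function `f_a(z) - a` has a double zero
at `z = a` and a double pole at `z = 0`; comparing coefficients, the cubic relation on `a` is exactly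
what makes `f_a(z) - a = (z - a)² / (a (2 - a) z²)`. Since `τ(z) = z / (a (z - a))`, the conjugacy
identity is then an identity of rational functions in `z`.
-/

/-- The quadratic rational map `f_a(z) = (z-1)(z - a/(2-a))/z²` in the slice `Per₃(0)`. -/
noncomputable def fRat (a : ℂ) (z : ℂ) : ℂ := (z - 1) * (z - a / (2 - a)) / z ^ 2

section CubicParameter

variable {a : ℂ}

theorem ne_zero_of_cubic (ha : a ^ 3 - 3 * a ^ 2 + 2 * a - 1 = 0) : a ≠ 0 := by
  rintro rfl
  norm_num at ha

theorem ne_two_of_cubic (ha : a ^ 3 - 3 * a ^ 2 + 2 * a - 1 = 0) : a ≠ 2 := by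
  rintro rfl
  norm_num at ha

theorem fRat_sub_self_of_cubic (ha : a ^ 3 - 3 * a ^ 2 + 2 * a - 1 = 0) {z : ℂ} (hz : z ≠ 0) :
    fRat a z - a = (z - a) ^ 2 / (a * (2 - a) * z ^ 2) := by
  have ha0 := ne_zero_of_cubic ha
  have h2 : (2 : ℂ) - a ≠ 0 := sub_ne_zero.mpr (ne_two_of_cubic ha).symm
  rw [fRat]
  field_simp
  linear_combination z ^ 2 * ha

end CubicParameter

theorem stmt_12 (a : ℂ) (ha : a ^ 3 - 3 * a ^ 2 + 2 * a - 1 = 0) :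
    a ≠ 0 ∧ a ≠ 2 ∧
      ∀ z : ℂ, z ≠ 0 → z ≠ a → fRat a z ≠ a →
        1 / (fRat a z - a) + 1 / a =
          1 / a - a ^ 3 * (a - 2) * (1 / (z - a) + 1 / a) ^ 2 := by
  have ha0 := ne_zero_of_cubic ha
  have ha2 := ne_two_of_cubic ha
  refine ⟨ha0, ha2, fun z hz hza _ => ?_⟩
  have h2 : (2 : ℂ) - a ≠ 0 := sub_ne_zero.mpr ha2.symm
  have hza' : z - a ≠ 0 := sub_ne_zero.mpr hza
  rw [fRat_sub_self_of_cubic ha hz]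
  field_simp
  ring
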